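/- Let a, b, c be real numbers with a < 1, b > 0, c > 0 and b ≠ c. Then ∑_{n=0}^∞ (n+1)·(a)_n (b)_n (c)_n / ((b+1)_n (c+1)_n · n!) = (b c Γ(1−a)/(c−b)) · [ (1−b)Γ(b)/Γ(1−a+b) − (1−c)Γ(c)/Γ(1−a+c) ]. -/

import Mathlib

noncomputable section

/-- Pochhammer symbol `(x)_n` for a complex number. -/
def poch (x : ℂ) (n : ℕ) : ℂ := ∏ k ∈ Finset.range n, (x + k)

/-- Pochhammer symbol `(x)_n` for a real number. -/
def pochR (x : ℝ) (n : ℕ) : ℝ := ∏ k ∈ Finset.range n, (x + k)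

/-- The open unit disc in `ℂ`. -/
def unitDisc : Set ℂ := {z : ℂ | ‖z‖ < 1}

/-- The class `A` of analytic functions on the unit disc normalized by
`f 0 = 0`, `f' 0 = 1` (i.e. `f z = z + ∑_{n≥2} a_n z^n`). -/
def memA (f : ℂ → ℂ) : Prop :=
  AnalyticOnNhd ℂ f unitDisc ∧ f 0 = 0 ∧ deriv f 0 = 1

/-- The class `S*_λ`. -/
def starlikeOrder (lam : ℝ) (f : ℂ → ℂ) : Prop :=
  memA f ∧ (∀ z ∈ unitDisc, z ≠ 0 → f z ≠ 0) ∧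
    ∀ z ∈ unitDisc, z ≠ 0 → ‖z * deriv f z / f z - 1‖ < lam

/-- The class `C_λ`: `f ∈ A` and `z ↦ z f'(z)` is in `S*_λ`. -/
def convexOrder (lam : ℝ) (f : ℂ → ℂ) : Prop :=
  memA f ∧ starlikeOrder lam (fun z => z * deriv f z)

/-- Uniformly convex functions. -/
def memUCV (f : ℂ → ℂ) : Prop :=
  memA f ∧ ∀ z ∈ unitDisc, deriv f z ≠ 0 ∧
    ‖z * deriv (deriv f) z / deriv f z‖ <
      (1 + z * deriv (deriv f) z / deriv f z).re

/-- The class `S_p`. -/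
def memSp (f : ℂ → ℂ) : Prop :=
  memA f ∧ (∀ z ∈ unitDisc, z ≠ 0 → f z ≠ 0) ∧
    ∀ z ∈ unitDisc, z ≠ 0 →
      ‖z * deriv f z / f z - 1‖ < (z * deriv f z / f z).re

/-- The class `R(β)`. -/
def memR (beta : ℝ) (f : ℂ → ℂ) : Prop :=
  memA f ∧ ∃ η ∈ Set.Ioo (-(Real.pi / 2)) (Real.pi / 2),
    ∀ z ∈ unitDisc, 0 < (Complex.exp (η * Complex.I) * (deriv f z - beta)).re

/-- The class `S` of univalent functions in `A`. -/
def memS (f : ℂ → ℂ) : Prop :=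
  memA f ∧ Set.InjOn f unitDisc

/-- Taylor coefficient of `f` at the origin. -/
def coeffAt (f : ℂ → ℂ) (n : ℕ) : ℂ := iteratedDeriv n f 0 / n.factorial

/-- Clausen's hypergeometric function `₃F₂(a,b,c;d,e;z)`. -/
def hyp32 (a b c d e z : ℂ) : ℂ :=
  ∑' n : ℕ, poch a n * poch b n * poch c n /
    (poch d n * poch e n * (n.factorial : ℂ)) * z ^ n

/-- The operator `I_{a,b,c}`: Hadamard product of `z ₃F₂(a,b,c;b+1,c+1;z)` with `f`. -/
def opI (a : ℂ) (b c : ℝ) (f : ℂ → ℂ) (z : ℂ) : ℂ :=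
  z + ∑' n : ℕ,
    (poch a (n + 1) * poch (b : ℂ) (n + 1) * poch (c : ℂ) (n + 1) /
      (poch ((b : ℂ) + 1) (n + 1) * poch ((c : ℂ) + 1) (n + 1) *
        ((n + 1).factorial : ℂ))) * coeffAt f (n + 2) * z ^ (n + 2)

/-!
By partial fractions, `(n + 1) (b)ₙ (c)ₙ / ((b + 1)ₙ (c + 1)ₙ)
= bc / (c - b) · ((1 - b) / (n + b) - (1 - c) / (n + c))`, so it suffices that
`∑ (a)ₙ / (n! (n + b)) = B(b, 1 - a)`. This comes from integrating the binomial series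
`(1 - t)^(-a) = ∑ (a)ₙ / n! tⁿ` against `t^(b - 1)` over `(0, 1)`. Termwise integration is
justified by dominated convergence: from `n = ⌈-a⌉` on, the coefficients `(a)ₙ / n!` all have
the sign of `(a)_⌈-a⌉`, so the series of absolute values differs from `±(1 - t)^(-a)` by a
polynomial.
-/

open Set Filter MeasureTheory

lemma pochR_succ (x : ℝ) (n : ℕ) : pochR x (n + 1) = pochR x n * (x + n) :=
  Finset.prod_range_succ _ n

lemma pochR_eq_eval_ascPochhammer (x : ℝ) (n : ℕ) :
    pochR x n = (ascPochhammer ℝ n).eval x := by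
  induction n with
  | zero => simp [pochR]
  | succ n ih => rw [pochR_succ, ih, ascPochhammer_succ_eval]

lemma pochR_add (x : ℝ) (k m : ℕ) : pochR x (k + m) = pochR x k * pochR (x + k) m := by
  rw [pochR, pochR, pochR, Finset.prod_range_add]
  congr 1
  refine Finset.prod_congr rfl fun i _ => ?_
  push_cast
  ring

lemma pochR_pos {x : ℝ} (hx : 0 < x) (n : ℕ) : 0 < pochR x n :=
  Finset.prod_pos fun _ _ => by positivity

lemma pochR_mul_add (x : ℝ) (n : ℕ) : pochR x n * (x + n) = x * pochR (x + 1) n := by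
  rw [← pochR_succ, ← add_comm 1 n, pochR_add]
  simp [pochR]

lemma pochR_eq_mul_pochR_add_one_div {x : ℝ} {n : ℕ} (h : x + n ≠ 0) :
    pochR x n = x * pochR (x + 1) n / (x + n) := by
  rw [eq_div_iff h, pochR_mul_add]

lemma pochR_ne_zero {x : ℝ} {n : ℕ} (h : ∀ k < n, x + k ≠ 0) : pochR x n ≠ 0 :=
  Finset.prod_ne_zero_iff.mpr fun k hk => h k (Finset.mem_range.mp hk)

lemma pochR_mul_pochR_nonneg {x : ℝ} {k n : ℕ} (hx : 0 ≤ x + k) (hkn : k ≤ n) :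
    0 ≤ pochR x k * pochR x n := by
  obtain ⟨m, rfl⟩ := Nat.exists_eq_add_of_le hkn
  rw [pochR_add, ← mul_assoc]
  exact mul_nonneg (mul_self_nonneg _) (Finset.prod_nonneg fun i _ => by positivity)

lemma Ring.choose_add_sub_one_eq_pochR_div (a : ℝ) (n : ℕ) :
    Ring.choose (a + n - 1) n = pochR a n / n.factorial := by
  rw [← Ring.multichoose_eq, eq_div_iff (by positivity), mul_comm, ← nsmul_eq_mul,
    Ring.factorial_nsmul_multichoose_eq_ascPochhammer, Polynomial.ascPochhammer_smeval_cast,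
    Polynomial.ascPochhammer_smeval_eq_eval, pochR_eq_eval_ascPochhammer]

theorem hasSum_pochR_div_factorial_mul_pow (a : ℝ) {t : ℝ} (ht : |t| < 1) :
    HasSum (fun n => pochR a n / n.factorial * t ^ n) ((1 - t) ^ (-a)) := by
  have h := (Real.one_div_one_sub_rpow_hasFPowerSeriesOnBall_zero a).hasSum
    (y := t) (by
      rwa [Metric.mem_eball, edist_zero_right, enorm_eq_nnnorm, ENNReal.coe_lt_one_iff,
        ← NNReal.coe_lt_one, coe_nnnorm, Real.norm_eq_abs])
  have h1 : 0 ≤ 1 - t := by linarith [abs_lt.mp ht]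
  simpa [FormalMultilinearSeries.ofScalars_apply_eq, Ring.choose_add_sub_one_eq_pochR_div,
    Real.rpow_neg h1, mul_comm] using h

theorem hasSum_integral_of_eventually_nonneg {α : Type*} [MeasurableSpace α] {μ : Measure α}
    {F : ℕ → α → ℝ} {f : α → ℝ} (hF : ∀ n, Integrable (F n) μ) (hf : Integrable f μ)
    (hF_nonneg : ∀ᶠ n in atTop, ∀ᵐ x ∂μ, 0 ≤ F n x)
    (h_lim : ∀ᵐ x ∂μ, HasSum (fun n => F n x) (f x)) :
    HasSum (fun n => ∫ x, F n x ∂μ) (∫ x, f x ∂μ) := by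
  obtain ⟨K, hK⟩ := eventually_atTop.mp hF_nonneg
  have h_nonneg : ∀ᵐ x ∂μ, ∀ n, K ≤ n → 0 ≤ F n x := by
    refine ae_all_iff.mpr fun n => ?_
    by_cases hn : K ≤ n
    · filter_upwards [hK n hn] with x hx _ using hx
    · exact Eventually.of_forall fun _ h => absurd h hn
  have h_abs : ∀ᵐ x ∂μ, HasSum (fun n => |F n x|)
      (∑ n ∈ Finset.range K, (|F n x| - F n x) + f x) := by
    filter_upwards [h_nonneg, h_lim] with x hx hs
    have h_tail : (fun n => |F (n + K) x|) = fun n => F (n + K) x :=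
      funext fun n => abs_of_nonneg (hx _ (Nat.le_add_left K n))
    refine (hasSum_nat_add_iff' K).mp ?_
    rw [h_tail, Finset.sum_sub_distrib]
    convert (hasSum_nat_add_iff' K).mpr hs using 1
    ring
  refine hasSum_integral_of_dominated_convergence (fun n x => |F n x|)
    (fun n => (hF n).aestronglyMeasurable) (fun n => Eventually.of_forall fun x => le_rfl)
    (h_abs.mono fun x hx => hx.summable) ?_ h_lim
  refine Integrable.congr ?_ (h_abs.mono fun x hx => hx.tsum_eq.symm)
  exact (integrable_finsetSum _ fun n _ => (hF n).abs.sub (hF n)).add hf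

lemma integrableOn_rpow_sub_one {s : ℝ} (hs : 0 < s) :
    IntegrableOn (fun t : ℝ => t ^ (s - 1)) (Ioo 0 1) :=
  ((intervalIntegrable_iff_integrableOn_Ioc_of_le zero_le_one).mp
    (intervalIntegral.intervalIntegrable_rpow' (by linarith))).mono_set Ioo_subset_Ioc_self

lemma integral_rpow_sub_one {s : ℝ} (hs : 0 < s) :
    ∫ t in Ioo (0 : ℝ) 1, t ^ (s - 1) = 1 / s := by
  rw [← integral_Ioc_eq_integral_Ioo, ← intervalIntegral.integral_of_le zero_le_one,
    _root_.integral_rpow (Or.inl (by linarith)), sub_add_cancel, Real.one_rpow,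
    Real.zero_rpow hs.ne', sub_zero]

section Beta

variable {x y : ℝ}

lemma ofReal_rpow_mul_one_sub_rpow {t : ℝ} (ht : t ∈ Icc (0 : ℝ) 1) :
    ((t ^ (x - 1) * (1 - t) ^ (y - 1) : ℝ) : ℂ) =
      (t : ℂ) ^ ((x : ℂ) - 1) * (1 - (t : ℂ)) ^ ((y : ℂ) - 1) := by
  rw [Complex.ofReal_mul, Complex.ofReal_cpow ht.1, Complex.ofReal_cpow (sub_nonneg.2 ht.2)]
  push_cast
  ring

lemma integrableOn_rpow_mul_one_sub_rpow (hx : 0 < x) (hy : 0 < y) :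
    IntegrableOn (fun t : ℝ => t ^ (x - 1) * (1 - t) ^ (y - 1)) (Ioo 0 1) := by
  have h := Complex.betaIntegral_convergent (u := x) (v := y) (by simpa) (by simpa)
  rw [intervalIntegrable_iff_integrableOn_Ioc_of_le zero_le_one] at h
  refine IntegrableOn.congr_fun (h.mono_set Ioo_subset_Ioc_self).re (fun t ht => ?_)
    measurableSet_Ioo
  rw [← ofReal_rpow_mul_one_sub_rpow (Ioo_subset_Icc_self ht)]
  exact Complex.ofReal_re _

lemma integral_rpow_mul_one_sub_rpow (hx : 0 < x) (hy : 0 < y) :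
    ∫ t in Ioo (0 : ℝ) 1, t ^ (x - 1) * (1 - t) ^ (y - 1) = ProbabilityTheory.beta x y := by
  have h : Complex.betaIntegral x y =
      ((∫ t in Ioo (0 : ℝ) 1, t ^ (x - 1) * (1 - t) ^ (y - 1) : ℝ) : ℂ) := by
    rw [Complex.betaIntegral, intervalIntegral.integral_of_le zero_le_one,
      integral_Ioc_eq_integral_Ioo, ← integral_complex_ofReal]
    exact setIntegral_congr_fun measurableSet_Ioo fun t ht =>
      (ofReal_rpow_mul_one_sub_rpow (Ioo_subset_Icc_self ht)).symm
  rw [ProbabilityTheory.beta_eq_betaIntegralReal x y hx hy, h, Complex.ofReal_re]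

end Beta

theorem hasSum_pochR_div_factorial_mul_add {a b : ℝ} (ha : a < 1) (hb : 0 < b) :
    HasSum (fun n => pochR a n / (n.factorial * (n + b)))
      (ProbabilityTheory.beta b (1 - a)) := by
  set K := ⌈-a⌉₊
  have hK : 0 ≤ a + K := by linarith [Nat.le_ceil (-a)]
  have hε : pochR a K ≠ 0 := pochR_ne_zero fun k hk => by
    have := Nat.lt_ceil.mp hk
    linarith
  set ε := pochR a K
  have h_coeff_nonneg : ∀ n, K ≤ n → 0 ≤ ε * (pochR a n / n.factorial) := fun n hn => by
    rw [← mul_div_assoc]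
    exact div_nonneg (pochR_mul_pochR_nonneg hK hn) (by positivity)
  have hnb : ∀ n : ℕ, 0 < (n : ℝ) + b := fun n => by positivity
  have h_lim : ∀ t ∈ Ioo (0 : ℝ) 1,
      HasSum (fun n => ε * (pochR a n / n.factorial) * t ^ ((n : ℝ) + b - 1))
        (ε * (t ^ (b - 1) * (1 - t) ^ (1 - a - 1))) := by
    intro t ht
    have h := ((hasSum_pochR_div_factorial_mul_pow a
      (abs_lt.mpr ⟨by linarith [ht.1], ht.2⟩)).mul_right (t ^ (b - 1))).mul_left ε
    rw [sub_sub_cancel_left, mul_comm (t ^ (b - 1))]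
    refine h.congr_fun fun n => ?_
    rw [add_sub_assoc, Real.rpow_add ht.1, Real.rpow_natCast]
    ring
  have key := hasSum_integral_of_eventually_nonneg (μ := volume.restrict (Ioo (0 : ℝ) 1))
    (fun n => (integrableOn_rpow_sub_one (hnb n)).const_mul _)
    ((integrableOn_rpow_mul_one_sub_rpow hb (by linarith : 0 < 1 - a)).const_mul ε)
    (eventually_atTop.mpr ⟨K, fun n hn => ae_restrict_of_forall_mem measurableSet_Ioo
      fun t ht => mul_nonneg (h_coeff_nonneg n hn) (Real.rpow_nonneg ht.1.le _)⟩)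
    (ae_restrict_of_forall_mem measurableSet_Ioo h_lim)
  simp only [integral_const_mul, integral_rpow_sub_one (hnb _),
    integral_rpow_mul_one_sub_rpow hb (by linarith : 0 < 1 - a)] at key
  refine (hasSum_mul_left_iff hε).mp ?_
  simpa only [mul_assoc, div_mul_div_comm, mul_one] using key

/-- Lemma 1(1): `∑_{n≥0} (n+1)(a)_n(b)_n(c)_n/((b+1)_n(c+1)_n n!)
  = (bcΓ(1-a)/(c-b))·[(1-b)Γ(b)/Γ(1-a+b) - (1-c)Γ(c)/Γ(1-a+c)]`. -/
theorem lemma1_part1 (a b c : ℝ) (ha : a < 1) (hb : 0 < b) (hc : 0 < c)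
    (hbc : b ≠ c) :
    HasSum
      (fun n : ℕ => (n + 1 : ℝ) * pochR a n * pochR b n * pochR c n /
        (pochR (b + 1) n * pochR (c + 1) n * (n.factorial : ℝ)))
      (b * c * Real.Gamma (1 - a) / (c - b) *
        ((1 - b) * Real.Gamma b / Real.Gamma (1 - a + b) -
         (1 - c) * Real.Gamma c / Real.Gamma (1 - a + c))) := by
  have H := (((hasSum_pochR_div_factorial_mul_add ha hb).mul_left (1 - b)).sub
    ((hasSum_pochR_div_factorial_mul_add ha hc).mul_left (1 - c))).mul_left (b * c / (c - b))
  have hcb : c - b ≠ 0 := sub_ne_zero.mpr hbc.symm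
  have hval : b * c * Real.Gamma (1 - a) / (c - b) *
      ((1 - b) * Real.Gamma b / Real.Gamma (1 - a + b) -
        (1 - c) * Real.Gamma c / Real.Gamma (1 - a + c)) =
      b * c / (c - b) * ((1 - b) * ProbabilityTheory.beta b (1 - a) -
        (1 - c) * ProbabilityTheory.beta c (1 - a)) := by
    rw [ProbabilityTheory.beta, ProbabilityTheory.beta, add_comm b, add_comm c]
    ring
  rw [hval]
  refine H.congr_fun fun n => ?_
  have hnb : b + n ≠ 0 := by positivity
  have hnc : c + n ≠ 0 := by positivity
  have hpb : pochR (b + 1) n ≠ 0 := (pochR_pos (by linarith) n).ne'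
  have hpc : pochR (c + 1) n ≠ 0 := (pochR_pos (by linarith) n).ne'
  rw [pochR_eq_mul_pochR_add_one_div hnb, pochR_eq_mul_pochR_add_one_div hnc]
  field_simp
  ring

end
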